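/- Let a < 0 < b < c/2. There exists a two-layer spiking neural network whose output firing time as a function of the input firing time x ∈ [a,b] equals f(x) = x + c for x > 0 and f(x) = c for x ≤ 0. Consequently, with encoding T_in + x and decoding −T_out + t_v where T_out = T_in + c, the network realizes the ReLU function σ(x) = max(0, x) on [a,b]. -/
import Mathlib


/-- `FiresAt w dl θ t τ`: SRM output neuron with weights `w`, delays `dl`,
threshold `θ` fires at time `τ` on input firing times `t` (some nonempty causal
subset with positive weight sum, arrival/firing order constraints, SRM formula). -/
def FiresAt {n : ℕ} (w dl : Fin n → ℝ) (θ : ℝ) (t : Fin n → ℝ) (τ : ℝ) : Prop :=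
  ∃ S : Finset (Fin n), S.Nonempty ∧ 0 < ∑ i ∈ S, w i ∧
    (∀ k ∈ S, t k + dl k < τ) ∧ (∀ k ∉ S, τ ≤ t k + dl k) ∧
    τ = (θ + ∑ i ∈ S, w i * (t i + dl i)) / (∑ i ∈ S, w i)

/-- for `a < 0 < b < c/2` there is a two-layer SNN (one variable
input neuron firing at `x`, one auxiliary input neuron with constant firing time
`taux`, two hidden neurons firing at `z x`, one output neuron firing at
`g x`) whose output firing time satisfies `g x = x + c` for `x > 0` and
`g x = c` for `x ≤ 0` on `[a,b]`. Consequently, with encoding `T_in + x` and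
decoding `−T_out + t_v`, `T_in = 0`, `T_out = T_in + c`, the network realizes
the ReLU function on `[a,b]`. -/
theorem stmt11 (a b c : ℝ) (ha : a < 0) (hb : 0 < b) (hbc : b < c / 2) :
    ∃ (W1 D1 : Fin 2 → Fin 2 → ℝ) (Θ1 : Fin 2 → ℝ) (w2 dl2 : Fin 2 → ℝ)
      (θ2 taux : ℝ) (z : ℝ → Fin 2 → ℝ) (g : ℝ → ℝ),
      (∀ j, 0 < Θ1 j) ∧ 0 < θ2 ∧ (∀ i j, 0 ≤ D1 i j) ∧ (∀ i, 0 ≤ dl2 i) ∧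
      (∀ x ∈ Set.Icc a b,
        (∀ j, FiresAt (fun i => W1 i j) (fun i => D1 i j) (Θ1 j)
            (fun i => if i = 0 then x else taux) (z x j)) ∧
        FiresAt w2 dl2 θ2 (z x) (g x) ∧
        g x = (if 0 < x then x + c else c)) ∧
      (∀ x ∈ Set.Icc a b, -(0 + c) + g (0 + x) = max 0 x) := by
  have hc : 0 < c := by linarith
  refine ⟨(fun i j => if i = 0 then (if j = 0 then -(1/2) else 0)
      else (if j = 0 then 1 else 2)),
    (fun _ _ => 0), (fun j => if j = 0 then c/2 else c),
    (fun i => if i = 0 then -(1/2) else 1), (fun _ => 0), c/2, 0,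
    (fun x j => if j = 0 then c - x else c/2),
    (fun x => if 0 < x then x + c else c), ?_, by linarith, fun _ _ => le_refl 0,
    fun _ => le_refl 0, ?_, ?_⟩
  · intro j; fin_cases j <;> simp <;> try linarith
  · intro x hx
    obtain ⟨hxa, hxb⟩ := hx
    have hxc : x < c / 2 := lt_of_le_of_lt hxb hbc
    refine ⟨?_, ?_, rfl⟩
    · intro j; fin_cases j
      · -- hidden neuron 0: weights (-1/2, 1), fires at c - x
        refine ⟨Finset.univ, ⟨0, Finset.mem_univ _⟩, ?_, ?_, ?_, ?_⟩
        · simp [Fin.sum_univ_two]; try norm_num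
        · intro k _; fin_cases k <;> simp <;> try linarith
        · intro k hk; exact absurd (Finset.mem_univ k) hk
        · simp [Fin.sum_univ_two]; try ring_nf; try field_simp; try ring
      · -- hidden neuron 1: weights (0, 2), fires at c/2
        refine ⟨Finset.univ, ⟨0, Finset.mem_univ _⟩, ?_, ?_, ?_, ?_⟩
        · simp [Fin.sum_univ_two]; try norm_num
        · intro k _; fin_cases k <;> simp <;> try linarith
        · intro k hk; exact absurd (Finset.mem_univ k) hk
        · simp [Fin.sum_univ_two]; try ring
    · -- output neuron
      by_cases hpos : 0 < x
      · refine ⟨Finset.univ, ⟨0, Finset.mem_univ _⟩, ?_, ?_, ?_, ?_⟩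
        · simp [Fin.sum_univ_two]; try norm_num
        · intro k _; fin_cases k <;> simp [hpos] <;> try linarith
        · intro k hk; exact absurd (Finset.mem_univ k) hk
        · simp [Fin.sum_univ_two, hpos]; field_simp; ring
      · refine ⟨{1}, ⟨1, Finset.mem_singleton_self 1⟩, ?_, ?_, ?_, ?_⟩
        · simp
        · intro k hk
          have : k = 1 := Finset.mem_singleton.mp hk
          subst this; simp [hpos]; linarith
        · intro k hk
          have hk0 : k = 0 := by fin_cases k <;> simp_all
          subst hk0; simp [hpos]; try linarith [not_lt.mp hpos]
        · simp [hpos]; try ring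
  · intro x hx
    by_cases hpos : 0 < x
    · simp [hpos]
      exact le_of_lt hpos
    · simp [hpos]
      exact not_lt.mp hpos
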